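/- Let A be a unital C*-algebra, p : ℝ → A a continuously differentiable path of orthogonal projections (p(t)* = p(t), p(t)² = p(t) for all t), and W : ℝ → A a differentiable solution of the equation W'(t) = [p'(t), p(t)]·W(t) with W(0) = 1. Then W(t) is unitary for every t ∈ ℝ: W(t)* W(t) = W(t) W(t)* = 1. -/

import Mathlib

open Set Filter Topology

/-!
Since `p` and `p'` are self-adjoint, the generator `G = [p', p]` is skew-adjoint, so
`(W* W)' = -W* G W + W* G W = 0` and `W* W = 1`. This only makes `W` an isometry; for
`W W* = 1` note that `W W*` and the constant `1` both solve the linear equation `Z' = [G, Z]`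
with the same value at `0`. Its right-hand side is locally Lipschitz in `Z` because `G` is
continuous, so the two solutions coincide.
-/

theorem ODE_solution_unique_univ_of_eventually_lipschitzWith
    {E : Type*} [NormedAddCommGroup E] [NormedSpace ℝ E] {v : ℝ → E → E}
    (hv : ∀ t₀, ∃ K, ∀ᶠ t in 𝓝 t₀, LipschitzWith K (v t)) {f g : ℝ → E}
    (hf : ∀ t, HasDerivAt f (v t (f t)) t) (hg : ∀ t, HasDerivAt g (v t (g t)) t)
    {t₀ : ℝ} (heq : f t₀ = g t₀) : f = g := by
  have hclosed : IsClosed {t | f t = g t} :=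
    isClosed_eq (continuous_iff_continuousAt.2 fun t => (hf t).continuousAt)
      (continuous_iff_continuousAt.2 fun t => (hg t).continuousAt)
  have hopen : IsOpen {t | f t = g t} := by
    refine isOpen_iff_mem_nhds.2 fun t ht => ?_
    obtain ⟨K, hK⟩ := hv t
    exact ODE_solution_unique_of_eventually (s := fun _ => univ)
      (hK.mono fun _ h => h.lipschitzOnWith) (.of_forall fun t => ⟨hf t, trivial⟩)
      (.of_forall fun t => ⟨hg t, trivial⟩) ht
  funext t
  exact eq_univ_iff_forall.1 (IsClopen.eq_univ ⟨hclosed, hopen⟩ ⟨t₀, heq⟩) t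

section Commutator

variable {A : Type*} [NormedRing A]

theorem lipschitzWith_mul_sub_mul (a : A) : LipschitzWith (2 * ‖a‖₊) fun x => a * x - x * a := by
  refine LipschitzWith.of_dist_le_mul fun x y => ?_
  calc dist (a * x - x * a) (a * y - y * a) = ‖a * (x - y) - (x - y) * a‖ := by
        rw [dist_eq_norm]; noncomm_ring
    _ ≤ ‖a‖ * ‖x - y‖ + ‖x - y‖ * ‖a‖ :=
        (norm_sub_le _ _).trans (add_le_add (norm_mul_le _ _) (norm_mul_le _ _))
    _ = 2 * ‖a‖ * dist x y := by rw [dist_eq_norm]; ring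

theorem eq_of_hasDerivAt_mul_sub_mul [NormedSpace ℝ A] {G : ℝ → A} (hG : Continuous G)
    {f g : ℝ → A} (hf : ∀ t, HasDerivAt f (G t * f t - f t * G t) t)
    (hg : ∀ t, HasDerivAt g (G t * g t - g t * G t) t) {t₀ : ℝ} (heq : f t₀ = g t₀) : f = g := by
  refine ODE_solution_unique_univ_of_eventually_lipschitzWith
    (v := fun t x => G t * x - x * G t) (fun s => ⟨2 * (‖G s‖₊ + 1), ?_⟩) hf hg heq
  filter_upwards [hG.nnnorm.continuousAt.eventually (gt_mem_nhds (lt_add_one ‖G s‖₊))] with t ht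
  exact (lipschitzWith_mul_sub_mul (G t)).weaken (by gcongr)

end Commutator

theorem isSelfAdjoint_deriv {F : Type*} [NormedAddCommGroup F] [NormedSpace ℝ F]
    [StarAddMonoid F] [StarModule ℝ F] [ContinuousStar F] {p : ℝ → F}
    (hp : ∀ t, IsSelfAdjoint (p t)) (t : ℝ) : IsSelfAdjoint (deriv p t) := by
  have hstar := deriv.star (f := p) (x := t)
  simp only [(hp _).star_eq] at hstar
  exact hstar.symm

theorem IsSelfAdjoint.star_mul_sub_mul {R : Type*} [Ring R] [StarRing R] {a b : R}
    (ha : IsSelfAdjoint a) (hb : IsSelfAdjoint b) : star (a * b - b * a) = -(a * b - b * a) := by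
  rw [star_sub, star_mul, star_mul, ha.star_eq, hb.star_eq, neg_sub]

section Propagator

variable {A : Type*} [NormedRing A] [StarRing A] [NormedAlgebra ℝ A] [StarModule ℝ A]
  [ContinuousStar A] {G W : ℝ → A}

theorem hasDerivAt_star_of_star_eq_neg (hG : ∀ t, star (G t) = -G t)
    (hW : ∀ t, HasDerivAt W (G t * W t) t) (t : ℝ) :
    HasDerivAt (fun s => star (W s)) (-(star (W t) * G t)) t := by
  simpa only [star_mul, hG, mul_neg] using (hW t).star

theorem star_mul_self_eq_of_star_eq_neg (hG : ∀ t, star (G t) = -G t)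
    (hW : ∀ t, HasDerivAt W (G t * W t) t) (t s : ℝ) :
    star (W t) * W t = star (W s) * W s := by
  have hderiv : ∀ t, HasDerivAt (fun s => star (W s) * W s) 0 t := fun t => by
    simpa only [neg_mul, mul_assoc, neg_add_cancel] using
      (hasDerivAt_star_of_star_eq_neg hG hW t).fun_mul (hW t)
  exact is_const_of_deriv_eq_zero (fun t => (hderiv t).differentiableAt)
    (fun t => (hderiv t).deriv) t s

theorem mul_star_self_eq_of_star_eq_neg (hG : ∀ t, star (G t) = -G t) (hGc : Continuous G)
    (hW : ∀ t, HasDerivAt W (G t * W t) t) {t₀ : ℝ} (hW₀ : W t₀ * star (W t₀) = 1) (t : ℝ) :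
    W t * star (W t) = 1 := by
  have hderiv : ∀ t, HasDerivAt (fun s => W s * star (W s))
      (G t * (W t * star (W t)) - W t * star (W t) * G t) t := fun t => by
    convert (hW t).fun_mul (hasDerivAt_star_of_star_eq_neg hG hW t) using 1
    noncomm_ring
  have hone : ∀ t, HasDerivAt (fun _ => (1 : A)) (G t * 1 - 1 * G t) t := fun t => by
    simpa only [mul_one, one_mul, sub_self] using hasDerivAt_const t (1 : A)
  exact congrFun (eq_of_hasDerivAt_mul_sub_mul hGc hderiv hone hW₀) t

end Propagator

theorem adiabatic_propagator_unitary_general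
    {A : Type*} [CStarAlgebra A]
    (p : ℝ → A) (hp : ContDiff ℝ 1 p)
    (hsa : ∀ t : ℝ, star (p t) = p t)
    (W : ℝ → A)
    (hW : ∀ t : ℝ, HasDerivAt W ((deriv p t * p t - p t * deriv p t) * W t) t)
    (hW0 : W 0 = 1) :
    ∀ t : ℝ, star (W t) * W t = 1 ∧ W t * star (W t) = 1 := by
  set G : ℝ → A := fun t => deriv p t * p t - p t * deriv p t
  have hG : ∀ t, star (G t) = -G t := fun t =>
    (isSelfAdjoint_deriv hsa t).star_mul_sub_mul (hsa t)
  have hGc : Continuous G :=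
    ((hp.continuous_deriv le_rfl).mul hp.continuous).sub
      (hp.continuous.mul (hp.continuous_deriv le_rfl))
  intro t
  constructor
  · rw [star_mul_self_eq_of_star_eq_neg hG hW t 0, hW0, star_one, one_mul]
  · exact mul_star_self_eq_of_star_eq_neg hG hGc hW (by rw [hW0, star_one, one_mul]) t

/-- **The adiabatic propagator is unitary.**
Let `A` be a unital C*-algebra, `p : ℝ → A` a continuously differentiable path of
orthogonal projections, and `W : ℝ → A` a differentiable solution of the parallel
transport equation `W'(t) = [p'(t), p(t)]·W(t)` with `W(0) = 1`.  Then `W(t)` is unitary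
for every `t`: `W(t)* W(t) = W(t) W(t)* = 1`. -/
theorem adiabatic_propagator_unitary
    {A : Type*} [CStarAlgebra A]
    (p : ℝ → A) (hp : ContDiff ℝ 1 p)
    (hsa : ∀ t : ℝ, star (p t) = p t) (hidem : ∀ t : ℝ, p t * p t = p t)
    (W : ℝ → A)
    (hW : ∀ t : ℝ, HasDerivAt W ((deriv p t * p t - p t * deriv p t) * W t) t)
    (hW0 : W 0 = 1) :
    ∀ t : ℝ, star (W t) * W t = 1 ∧ W t * star (W t) = 1 :=
  adiabatic_propagator_unitary_general p hp hsa W hW hW0
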